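/- Let α be a complex number with Re(α) ≠ 0. Writing ε_α for the continuous multiplicative automorphism of ℂ given by ε_α(r s) = r^α s for r > 0, s on the unit circle, and ε_α(0) = 0, the inverse of ε_α is ε_β with β = (1 − i·Im(α))/Re(α); that is, ε_β(ε_α(z)) = z for all z ∈ ℂ. -/

import Mathlib

/-- The continuous multiplicative automorphism `ε_α` of `ℂ`: for `z = rs` with
`r = |z| > 0` and `s = z/|z|` on the unit circle, `ε_α(z) = r^α s`; `ε_α(0) = 0`. -/
noncomputable def cEps (α : ℂ) (z : ℂ) : ℂ :=
  if z = 0 then 0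
  else Complex.exp (α * (Real.log ‖z‖ : ℂ)) * (z / (‖z‖ : ℂ))

/-! `ε_β ∘ ε_α = ε_γ` with `γ = Re α · β + i Im α`: the modulus of `ε_α(z)` is `|z|^{Re α}`, while
the phase factor `|z|^{i Im α}` joins the unit part. Since `ε_1 = id`, the inverse of `ε_α` is
`ε_β` for the unique `β` with `Re α · β + i Im α = 1`. -/

open Complex

namespace cEps

@[simp]
lemma apply_zero (α : ℂ) : cEps α 0 = 0 := if_pos rfl

lemma apply_of_ne_zero (α : ℂ) {z : ℂ} (hz : z ≠ 0) :
    cEps α z = exp (α * (Real.log ‖z‖ : ℂ)) * (z / (‖z‖ : ℂ)) := if_neg hz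

lemma ne_zero (α : ℂ) {z : ℂ} (hz : z ≠ 0) : cEps α z ≠ 0 := by
  rw [apply_of_ne_zero α hz]
  exact mul_ne_zero (exp_ne_zero _) (div_ne_zero hz (ofReal_ne_zero.mpr (norm_ne_zero_iff.mpr hz)))

lemma norm_apply (α : ℂ) {z : ℂ} (hz : z ≠ 0) :
    ‖cEps α z‖ = Real.exp (α.re * Real.log ‖z‖) := by
  rw [apply_of_ne_zero α hz, norm_mul, norm_exp, norm_div, norm_real, norm_norm,
    div_self (norm_ne_zero_iff.mpr hz), mul_one, re_mul_ofReal]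

@[simp]
lemma one_apply (z : ℂ) : cEps 1 z = z := by
  rcases eq_or_ne z 0 with rfl | hz
  · exact apply_zero 1
  have hr : (0 : ℝ) < ‖z‖ := norm_pos_iff.mpr hz
  rw [apply_of_ne_zero 1 hz, one_mul, ← ofReal_exp, Real.exp_log hr]
  exact mul_div_cancel₀ z (ofReal_ne_zero.mpr hr.ne')

lemma comp_apply (β α z : ℂ) : cEps β (cEps α z) = cEps (α.re * β + I * α.im) z := by
  rcases eq_or_ne z 0 with rfl | hz
  · simp only [apply_zero]
  set L : ℝ := Real.log ‖z‖
  have hexp : (α.re * β + I * α.im) * L = β * (α.re * L : ℝ) + α * L - (α.re * L : ℝ) := by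
    push_cast
    linear_combination (L : ℂ) * re_add_im α
  rw [apply_of_ne_zero β (ne_zero α hz), norm_apply α hz, Real.log_exp,
    apply_of_ne_zero α hz, apply_of_ne_zero _ hz, hexp, exp_sub, exp_add, ofReal_exp]
  ring

end cEps

/-- The inverse of `ε_α` (for `Re α ≠ 0`) is `ε_β` with `β = (1 − i·Im α)/Re α`. -/
theorem cEps_inverse (α : ℂ) (hα : α.re ≠ 0) (z : ℂ) :
    cEps ((1 - Complex.I * (α.im : ℂ)) / (α.re : ℂ)) (cEps α z) = z := by
  have hexp : (α.re : ℂ) * ((1 - I * α.im) / α.re) + I * α.im = 1 := by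
    rw [mul_div_cancel₀ _ (ofReal_ne_zero.mpr hα)]
    ring
  rw [cEps.comp_apply, hexp, cEps.one_apply]
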